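/- If an FT3S system is first-order symmetric hyperbolic, then it is FT3S symmetric hyperbolic. Precisely: if for some admissible reduction parameters D^p there is a constant Hermitian positive-definite H1 on W1 with H1 A1^p Hermitian for every p in {1,2,3}, then the diagonal block H22 of H1 corresponding to the variables (d^u_{ij}, d^v_i, w) is an FT3S symmetrizer: H22 is Hermitian, positive definite on W3, and (iota_s* H22 iota_s) P3(s) is Hermitian for every unit vector s in R^3. -/

import Mathlib

open Matrix

/-- Index type for the FT3S state `(u, v, w)`. -/
abbrev I3 (nu nv nw : ℕ) : Type := Fin nu ⊕ (Fin nv ⊕ Fin nw)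

/-- Index type for `W₃`: tuples `(X_{ij}, Y_i, Z)` (tensor indices written out in full;
the space `W₃` consists of the vectors symmetric in the pair `(i,j)`). -/
abbrev I3f (nu nv nw : ℕ) : Type :=
  (Fin 3 × Fin 3 × Fin nu) ⊕ ((Fin 3 × Fin nv) ⊕ Fin nw)

/-- Index type for the first-order state `(u, d^u_i, v, d^u_{ij}, d^v_i, w)`. -/
abbrev I1 (nu nv nw : ℕ) : Type :=
  Fin nu ⊕ ((Fin 3 × Fin nu) ⊕ (Fin nv ⊕ I3f nu nv nw))

/-- Kronecker delta. -/
def kr (a b : Fin 3) : ℂ := if a = b then 1 else 0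

/-- The row/column of `u`. -/
abbrev colU {nu nv nw : ℕ} (m : Fin nu) : I1 nu nv nw := Sum.inl m
/-- The row/column of `d^u_k`. -/
abbrev colDu {nu nv nw : ℕ} (k : Fin 3) (m : Fin nu) : I1 nu nv nw :=
  Sum.inr (Sum.inl (k, m))
/-- The row/column of `v`. -/
abbrev colV {nu nv nw : ℕ} (q : Fin nv) : I1 nu nv nw := Sum.inr (Sum.inr (Sum.inl q))
/-- The row/column of `d^u_{kl}`. -/
abbrev col4 {nu nv nw : ℕ} (k l : Fin 3) (m : Fin nu) : I1 nu nv nw :=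
  Sum.inr (Sum.inr (Sum.inr (Sum.inl (k, l, m))))
/-- The row/column of `d^v_k`. -/
abbrev col5 {nu nv nw : ℕ} (k : Fin 3) (q : Fin nv) : I1 nu nv nw :=
  Sum.inr (Sum.inr (Sum.inr (Sum.inr (Sum.inl (k, q)))))
/-- The row/column of `w`. -/
abbrev col6 {nu nv nw : ℕ} (t : Fin nw) : I1 nu nv nw :=
  Sum.inr (Sum.inr (Sum.inr (Sum.inr (Sum.inr t))))

/-- The embedding of the `(d^u_{ij}, d^v_i, w)` block into the first-order state. -/
abbrev embW {nu nv nw : ℕ} (r : I3f nu nv nw) : I1 nu nv nw := Sum.inr (Sum.inr (Sum.inr r))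

variable {nu nv nw : ℕ}
  (Auu : Fin 3 → Matrix (Fin nu) (Fin nu) ℂ) (Auv : Matrix (Fin nu) (Fin nv) ℂ)
  (Avu : Fin 3 → Fin 3 → Matrix (Fin nv) (Fin nu) ℂ)
  (Avv : Fin 3 → Matrix (Fin nv) (Fin nv) ℂ)
  (Avw : Matrix (Fin nv) (Fin nw) ℂ)
  (Awu : Fin 3 → Fin 3 → Fin 3 → Matrix (Fin nw) (Fin nu) ℂ)
  (Awv : Fin 3 → Fin 3 → Matrix (Fin nw) (Fin nv) ℂ)
  (Aww : Fin 3 → Matrix (Fin nw) (Fin nw) ℂ)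

/-- The FT3S principal symbol `P₃(s)`. -/
noncomputable def P3 (s : Fin 3 → ℝ) : Matrix (I3 nu nv nw) (I3 nu nv nw) ℂ :=
  Matrix.of fun r c =>
    match r, c with
    | Sum.inl m, Sum.inl m' => ∑ i, (s i : ℂ) * Auu i m m'
    | Sum.inl m, Sum.inr (Sum.inl q) => Auv m q
    | Sum.inl _, Sum.inr (Sum.inr _) => 0
    | Sum.inr (Sum.inl p), Sum.inl m' => ∑ i, ∑ j, (s i : ℂ) * (s j : ℂ) * Avu i j p m'
    | Sum.inr (Sum.inl p), Sum.inr (Sum.inl q) => ∑ i, (s i : ℂ) * Avv i p q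
    | Sum.inr (Sum.inl p), Sum.inr (Sum.inr t) => Avw p t
    | Sum.inr (Sum.inr t), Sum.inl m' =>
        ∑ i, ∑ j, ∑ k, (s i : ℂ) * (s j : ℂ) * (s k : ℂ) * Awu i j k t m'
    | Sum.inr (Sum.inr t), Sum.inr (Sum.inl q) =>
        ∑ i, ∑ j, (s i : ℂ) * (s j : ℂ) * Awv i j t q
    | Sum.inr (Sum.inr t), Sum.inr (Sum.inr t') => ∑ i, (s i : ℂ) * Aww i t t'

/-- The map `ι_s : ℂ^{n_u} ⊕ ℂ^{n_v} ⊕ ℂ^{n_w} → W₃`, `ι_s(x,y,z) = (sᵢsⱼx, sᵢy, z)`. -/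
noncomputable def iotaS {nu nv nw : ℕ} (s : Fin 3 → ℝ) :
    Matrix (I3f nu nv nw) (I3 nu nv nw) ℂ :=
  Matrix.of fun r c =>
    match r, c with
    | Sum.inl (i, j, m), Sum.inl m' => (s i : ℂ) * (s j : ℂ) * (if m = m' then 1 else 0)
    | Sum.inr (Sum.inl (i, q)), Sum.inr (Sum.inl q') =>
        (s i : ℂ) * (if q = q' then 1 else 0)
    | Sum.inr (Sum.inr t), Sum.inr (Sum.inr t') => if t = t' then 1 else 0
    | _, _ => 0

/-- The principal matrices `A₀^p` of the direct first-order reduction (without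
the reduction-parameter additions). -/
noncomputable def A0 (p : Fin 3) : Matrix (I1 nu nv nw) (I1 nu nv nw) ℂ :=
  Matrix.of fun r c =>
    match r, c with
    | Sum.inr (Sum.inr (Sum.inr (Sum.inl (i, j, m)))),
        Sum.inr (Sum.inr (Sum.inr (Sum.inl (k, l, m')))) =>
        (4 : ℂ)⁻¹ * (Auu k m m' * (kr l i * kr p j + kr l j * kr p i)
          + Auu l m m' * (kr k i * kr p j + kr k j * kr p i))
    | Sum.inr (Sum.inr (Sum.inr (Sum.inl (i, j, m)))),
        Sum.inr (Sum.inr (Sum.inr (Sum.inr (Sum.inl (k, q))))) =>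
        (2 : ℂ)⁻¹ * (kr p i * kr k j + kr p j * kr k i) * Auv m q
    | Sum.inr (Sum.inr (Sum.inr (Sum.inr (Sum.inl (i, q))))),
        Sum.inr (Sum.inr (Sum.inr (Sum.inl (k, l, m')))) =>
        kr p i * Avu k l q m'
    | Sum.inr (Sum.inr (Sum.inr (Sum.inr (Sum.inl (i, q))))),
        Sum.inr (Sum.inr (Sum.inr (Sum.inr (Sum.inl (k, q'))))) =>
        kr p i * Avv k q q'
    | Sum.inr (Sum.inr (Sum.inr (Sum.inr (Sum.inl (i, q))))),
        Sum.inr (Sum.inr (Sum.inr (Sum.inr (Sum.inr t)))) =>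
        kr p i * Avw q t
    | Sum.inr (Sum.inr (Sum.inr (Sum.inr (Sum.inr t)))),
        Sum.inr (Sum.inr (Sum.inr (Sum.inl (k, l, m')))) =>
        Awu p k l t m'
    | Sum.inr (Sum.inr (Sum.inr (Sum.inr (Sum.inr t)))),
        Sum.inr (Sum.inr (Sum.inr (Sum.inr (Sum.inl (k, q))))) =>
        Awv p k t q
    | Sum.inr (Sum.inr (Sum.inr (Sum.inr (Sum.inr t)))),
        Sum.inr (Sum.inr (Sum.inr (Sum.inr (Sum.inr t')))) =>
        Aww p t t'
    | _, _ => 0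

/-- Admissibility of the reduction parameters `D^p`: arbitrary on the columns over
`(u, d^u_k, v)`; on the column over `d^u_{kl}` symmetric in `(k,l)` with vanishing total
symmetrization over `(p,k,l)`; on the column over `d^v_k` with vanishing symmetrization
over `(p,k)`; zero on the column over `w`; and symmetric in the lower multi-index of each
row. -/
def AdmissibleD {nu nv nw : ℕ} (D : Fin 3 → Matrix (I1 nu nv nw) (I1 nu nv nw) ℂ) : Prop :=
  (∀ p r t, D p r (col6 t) = 0) ∧
  (∀ p r k l m, D p r (col4 k l m) = D p r (col4 l k m)) ∧
  (∀ p r k l m,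
    D p r (col4 k l m) + D p r (col4 l k m) + D k r (col4 l p m) + D k r (col4 p l m)
      + D l r (col4 p k m) + D l r (col4 k p m) = 0) ∧
  (∀ p r k q, D p r (col5 k q) + D k r (col5 p q) = 0) ∧
  (∀ p i j m c, D p (col4 i j m) c = D p (col4 j i m) c)

/-!
Contract the first-order system with a unit covector: `A(s) = ∑ₚ sₚ A₁ᵖ`, and `H₁ A(s)` is
Hermitian. Let `J_s` be `ι_s` placed in the `(d^u_{ij}, d^v_i, w)` slots of `W₁`. The reduced
principal part acts on such jets as the third-order symbol, `A₀(s) J_s = J_s P₃(s)`, while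
`D(s) J_s = 0`: contracting the parameters with `sₚ sₖ (sₗ)` only sees their symmetrization over
the upper indices, which vanishes. Hence `J_sᴴ H₁ J_s P₃(s) = J_sᴴ (H₁ A(s)) J_s` is Hermitian,
and `J_sᴴ H₁ J_s = ι_sᴴ H₂₂ ι_s`. Positivity of `H₂₂` is that of `H₁` on vectors supported in
those slots.
-/

section Contraction

variable {ι K : Type*} [Fintype ι] [Field K] [CharZero K]

theorem sum_sum_mul_mul_eq_zero_of_antisymm (σ : ι → K) (f : ι → ι → K)
    (hf : ∀ p k, f p k + f k p = 0) :
    ∑ p, ∑ k, σ p * σ k * f p k = 0 := by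
  have hswap : ∑ p, ∑ k, σ p * σ k * f k p = ∑ p, ∑ k, σ p * σ k * f p k := by
    rw [Finset.sum_comm]
    simp only [mul_comm (σ _) (σ _)]
  have h2 : 2 * ∑ p, ∑ k, σ p * σ k * f p k = 0 :=
    calc _ = ∑ p, ∑ k, σ p * σ k * (f p k + f k p) := by
          simp only [mul_add, Finset.sum_add_distrib, hswap, two_mul]
      _ = 0 := by simp [hf]
  simpa using h2

theorem sum_sum_sum_mul_mul_mul_eq_zero_of_symmetrization_eq_zero (σ : ι → K)
    (f : ι → ι → ι → K)
    (hf : ∀ p k l, f p k l + f p l k + f k l p + f k p l + f l p k + f l k p = 0) :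
    ∑ p, ∑ k, ∑ l, σ p * σ k * σ l * f p k l = 0 := by
  set S := ∑ p, ∑ k, ∑ l, σ p * σ k * σ l * f p k l
  have swap23 : ∀ g : ι → ι → ι → K,
      ∑ p, ∑ k, ∑ l, σ p * σ k * σ l * g p l k = ∑ p, ∑ k, ∑ l, σ p * σ k * σ l * g p k l := by
    intro g
    refine Finset.sum_congr rfl fun p _ => ?_
    rw [Finset.sum_comm]
    refine Finset.sum_congr rfl fun k _ => Finset.sum_congr rfl fun l _ => ?_
    ring
  have cycle : ∀ g : ι → ι → ι → K,
      ∑ p, ∑ k, ∑ l, σ p * σ k * σ l * g k l p = ∑ p, ∑ k, ∑ l, σ p * σ k * σ l * g p k l := by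
    intro g
    rw [Finset.sum_comm]
    refine Finset.sum_congr rfl fun k _ => ?_
    rw [Finset.sum_comm]
    refine Finset.sum_congr rfl fun l _ => Finset.sum_congr rfl fun p _ => ?_
    ring
  have e1 : ∑ p, ∑ k, ∑ l, σ p * σ k * σ l * f p l k = S := swap23 f
  have e2 : ∑ p, ∑ k, ∑ l, σ p * σ k * σ l * f k l p = S := cycle f
  have e3 : ∑ p, ∑ k, ∑ l, σ p * σ k * σ l * f l p k = S := (cycle fun p k l => f k l p).trans e2
  have e4 : ∑ p, ∑ k, ∑ l, σ p * σ k * σ l * f k p l = S := (cycle fun p k l => f p l k).trans e1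
  have e5 : ∑ p, ∑ k, ∑ l, σ p * σ k * σ l * f l k p = S := (cycle fun p k l => f k p l).trans e4
  have h6 : 6 * S = 0 :=
    calc 6 * S = ∑ p, ∑ k, ∑ l, σ p * σ k * σ l *
          (f p k l + f p l k + f k l p + f k p l + f l p k + f l k p) := by
          simp only [mul_add, Finset.sum_add_distrib, e1, e2, e3, e4, e5]
          ring
      _ = 0 := by simp [hf]
  simpa using h6

end Contraction

namespace Matrix

variable {m n α : Type*} [DecidableEq n] [Semiring α]

theorem conjTranspose_one_submatrix_mul_mul [Fintype n] [StarRing α] (e : m → n)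
    (H : Matrix n n α) :
    ((1 : Matrix n n α).submatrix id e)ᴴ * H * (1 : Matrix n n α).submatrix id e
      = H.submatrix e e := by
  ext x y
  simp [mul_apply, one_apply]

theorem one_submatrix_mulVec_apply_self [Fintype m] {e : m → n} (he : Function.Injective e)
    (y : m → α) (x : m) : ((1 : Matrix n n α).submatrix id e *ᵥ y) (e x) = y x := by
  simp only [mulVec, dotProduct, submatrix_apply, id, one_apply, ite_mul, one_mul, zero_mul]
  rw [Finset.sum_eq_single x (fun b _ hb => if_neg fun h => hb (he h).symm) (by simp), if_pos rfl]

theorem IsHermitian.mul_sum_ofReal_smul {n ι 𝕜 : Type*} [Fintype n] [Fintype ι]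
    [RCLike 𝕜] {H : Matrix n n 𝕜} {A : ι → Matrix n n 𝕜} (h : ∀ p, (H * A p).IsHermitian)
    (c : ι → ℝ) : (H * ∑ p, (c p : 𝕜) • A p).IsHermitian := by
  rw [Matrix.mul_sum]
  refine isSelfAdjoint_sum _ fun p _ => ?_
  rw [Matrix.mul_smul]
  exact (h p).smul (RCLike.conj_ofReal _)

end Matrix

theorem embW_injective : Function.Injective (embW : I3f nu nv nw → I1 nu nv nw) :=
  Sum.inr_injective.comp (Sum.inr_injective.comp Sum.inr_injective)

noncomputable def liftIotaS (s : Fin 3 → ℝ) : Matrix (I1 nu nv nw) (I3 nu nv nw) ℂ :=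
  Matrix.of fun r c =>
    match r with
    | Sum.inr (Sum.inr (Sum.inr x)) => iotaS s x c
    | _ => 0

-- Without the explicit dimensions, `*` is elaborated through the `CStarMatrix` instance.
theorem one_submatrix_embW_mul_iotaS (s : Fin 3 → ℝ) :
    (1 : Matrix (I1 nu nv nw) (I1 nu nv nw) ℂ).submatrix id embW
      * iotaS (nu := nu) (nv := nv) (nw := nw) s = liftIotaS s := by
  ext r c
  rcases r with m | d | q | x <;> simp [liftIotaS, mul_apply, one_apply]

theorem sum_smul_A0_mul_liftIotaS (s : Fin 3 → ℝ) :
    (∑ p, (s p : ℂ) • A0 Auu Auv Avu Avv Avw Awu Awv Aww p)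
        * liftIotaS (nu := nu) (nv := nv) (nw := nw) s
      = liftIotaS (nu := nu) (nv := nv) (nw := nw) s * P3 Auu Auv Avu Avv Avw Awu Awv Aww s := by
  ext r c
  rw [Matrix.mul_apply, Matrix.mul_apply]
  rcases r with m | (d | (q | (⟨i, j, m⟩ | (⟨i, q⟩ | t)))) <;>
    rcases c with m' | (q' | t') <;>
    simp only [A0, liftIotaS, iotaS, P3, Matrix.of_apply, Matrix.sum_apply, Matrix.smul_apply,
      smul_eq_mul, Fintype.sum_sum_type, Fintype.sum_prod_type, mul_zero, zero_mul,
      Finset.sum_const_zero, add_zero, zero_add, mul_ite, ite_mul, mul_one, one_mul,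
      Finset.sum_ite_eq, Finset.sum_ite_eq', Finset.mem_univ, if_true] <;>
    (try simp only [kr, mul_ite, ite_mul, mul_zero, zero_mul, mul_one, one_mul, mul_add,
      add_mul, Finset.sum_add_distrib, Finset.sum_ite_eq',
      Finset.mem_univ, if_true, Finset.mul_sum, Finset.sum_mul, Finset.sum_ite_irrel,
      Finset.sum_const_zero]) <;>
    (try simp only [Fin.sum_univ_three]) <;>
    (try ring)

theorem AdmissibleD.sum_smul_mul_liftIotaS {D : Fin 3 → Matrix (I1 nu nv nw) (I1 nu nv nw) ℂ}
    (hD : AdmissibleD D) (s : Fin 3 → ℝ) :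
    (∑ p, (s p : ℂ) • D p) * liftIotaS (nu := nu) (nv := nv) (nw := nw) s = 0 := by
  obtain ⟨hw, -, hdu, hdv, -⟩ := hD
  ext r c
  rw [Matrix.sum_mul, Matrix.sum_apply]
  rcases c with m' | q' | t' <;>
    simp only [Matrix.smul_apply, smul_eq_mul, mul_apply, liftIotaS, iotaS, of_apply,
      Fintype.sum_sum_type, Fintype.sum_prod_type, mul_zero, Finset.sum_const_zero, add_zero,
      zero_add, mul_ite, mul_one, Finset.mem_univ, if_true, Matrix.zero_apply, Finset.sum_ite_eq']
  · convert sum_sum_sum_mul_mul_mul_eq_zero_of_symmetrization_eq_zero (fun p => (s p : ℂ))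
      (fun p k l => D p r (col4 k l m')) (fun p k l => hdu p r k l m') using 4
    ring
  · convert sum_sum_mul_mul_eq_zero_of_antisymm (fun p => (s p : ℂ))
      (fun p k => D p r (col5 k q')) (fun p k => hdv p r k q') using 3
    ring
  · simp [hw]

theorem re_star_dotProduct_submatrix_embW_mulVec_pos
    {H1 : Matrix (I1 nu nv nw) (I1 nu nv nw) ℂ}
    (hH1pos : ∀ x : I1 nu nv nw → ℂ,
      (∀ i j m, x (col4 i j m) = x (col4 j i m)) → x ≠ 0 → 0 < (star x ⬝ᵥ (H1 *ᵥ x)).re)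
    {y : I3f nu nv nw → ℂ} (hsym : ∀ i j m, y (Sum.inl (i, j, m)) = y (Sum.inl (j, i, m)))
    (hy : y ≠ 0) : 0 < (star y ⬝ᵥ (H1.submatrix embW embW *ᵥ y)).re := by
  set E := (1 : Matrix (I1 nu nv nw) (I1 nu nv nw) ℂ).submatrix id embW
  have hEy : ∀ x, (E *ᵥ y) (embW x) = y x := one_submatrix_mulVec_apply_self embW_injective y
  have hpos := hH1pos (E *ᵥ y) (fun i j m => (hEy _).trans ((hsym i j m).trans (hEy _).symm))
    fun h => hy (funext fun x => by rw [← hEy x, h, Pi.zero_apply, Pi.zero_apply])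
  rw [← conjTranspose_one_submatrix_mul_mul embW H1]
  simpa only [star_mulVec, dotProduct_mulVec, vecMul_vecMul] using hpos

theorem isHermitian_conjTranspose_iotaS_mul_submatrix_mul_P3
    {D : Fin 3 → Matrix (I1 nu nv nw) (I1 nu nv nw) ℂ} (hD : AdmissibleD D)
    {H1 : Matrix (I1 nu nv nw) (I1 nu nv nw) ℂ}
    (hHA : ∀ p, (H1 * (A0 Auu Auv Avu Avv Avw Awu Awv Aww p + D p)).IsHermitian)
    (s : Fin 3 → ℝ) :
    ((iotaS (nu := nu) (nv := nv) (nw := nw) s)ᴴ * H1.submatrix embW embW * iotaS s *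
      P3 Auu Auv Avu Avv Avw Awu Awv Aww s).IsHermitian := by
  set ι := iotaS (nu := nu) (nv := nv) (nw := nw) s
  set J := liftIotaS (nu := nu) (nv := nv) (nw := nw) s
  set A := ∑ p, (s p : ℂ) • (A0 Auu Auv Avu Avv Avw Awu Awv Aww p + D p)
  have hJ : (1 : Matrix (I1 nu nv nw) (I1 nu nv nw) ℂ).submatrix id embW * ι = J :=
    one_submatrix_embW_mul_iotaS s
  have hAJ : A * J = J * P3 Auu Auv Avu Avv Avw Awu Awv Aww s := by
    simp only [A, smul_add, Finset.sum_add_distrib, Matrix.add_mul, hD.sum_smul_mul_liftIotaS,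
      add_zero, sum_smul_A0_mul_liftIotaS, J]
  have key : ιᴴ * H1.submatrix embW embW * ι * P3 Auu Auv Avu Avv Avw Awu Awv Aww s
      = Jᴴ * (H1 * A) * J := by
    simp only [Matrix.mul_assoc, hAJ]
    rw [← hJ, ← conjTranspose_one_submatrix_mul_mul embW H1, conjTranspose_mul]
    simp only [Matrix.mul_assoc]
  exact key ▸ isHermitian_conjTranspose_mul_mul J (IsHermitian.mul_sum_ofReal_smul hHA s)

/-- first-order symmetric hyperbolicity implies FT3S symmetric
hyperbolicity: if `H₁` is a Hermitian symmetrizer, positive definite on `W₁`, of a direct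
first-order reduction `A₁^p = A₀^p + D^p`, then its diagonal block `H₂₂` over
`(d^u_{ij}, d^v_i, w)` is an FT3S symmetrizer. -/
theorem stmt_2
    (D : Fin 3 → Matrix (I1 nu nv nw) (I1 nu nv nw) ℂ) (hD : AdmissibleD D)
    (H1 : Matrix (I1 nu nv nw) (I1 nu nv nw) ℂ)
    (hH1herm : H1.IsHermitian)
    (hH1pos : ∀ x : I1 nu nv nw → ℂ,
      (∀ i j m, x (col4 i j m) = x (col4 j i m)) → x ≠ 0 →
      0 < (star x ⬝ᵥ (H1 *ᵥ x)).re)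
    (hHA : ∀ p, (H1 * (A0 Auu Auv Avu Avv Avw Awu Awv Aww p + D p)).IsHermitian) :
    (H1.submatrix (embW (nu := nu) (nv := nv) (nw := nw)) embW).IsHermitian ∧
    (∀ y : I3f nu nv nw → ℂ,
      (∀ i j m, y (Sum.inl (i, j, m)) = y (Sum.inl (j, i, m))) → y ≠ 0 →
      0 < (star y ⬝ᵥ ((H1.submatrix embW embW) *ᵥ y)).re) ∧
    (∀ s : Fin 3 → ℝ, (∑ i, s i ^ 2) = 1 →
      ((iotaS (nu := nu) (nv := nv) (nw := nw) s)ᴴ * H1.submatrix embW embW * iotaS s *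
        P3 Auu Auv Avu Avv Avw Awu Awv Aww s).IsHermitian) :=
  ⟨hH1herm.submatrix embW, fun _ => re_star_dotProduct_submatrix_embW_mulVec_pos hH1pos,
    fun s _ =>
      isHermitian_conjTranspose_iotaS_mul_submatrix_mul_P3 Auu Auv Avu Avv Avw Awu Awv Aww hD hHA s⟩
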